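/- Let f : ℝⁿ × ℝʳ → ℝⁿ, let W ⊆ ℝʳ, and let Ξ ⊆ ℝⁿ be robustly positively invariant for x_{t+1} = f(x_t, w_t). Let α₄ and ρ be functions of class K∞ such that id − ρ is also of class K∞, let b > 0, and let ω ≥ 0 satisfy ω ≤ ρ(α₄(b)). Let V : ℝⁿ × ℝʳ → [0,∞) satisfy V(f(x,w), w') ≤ V(x,w) − α₄(V(x,w)) + ω for all x ∈ Ξ and all w, w' ∈ W. Then along every trajectory x_{t+1} = f(x_t, w_t) with x₀ ∈ Ξ and w_t ∈ W for all t, the sublevel set {V ≤ b} is reached in finite time: there exists T ≥ 0 such that V(x_T, w_T) ≤ b. In fact, whenever V(x_t, w_t) > b one has V(x_{t+1}, w_{t+1}) ≤ V(x_t, w_t) − (id − ρ)(α₄(b)), where (id − ρ)(α₄(b)) > 0. -/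
import Mathlib


open Set Filter

/-- A function of class K: continuous, strictly increasing on `[0,∞)`, zero at zero. -/
def IsClassK (α : ℝ → ℝ) : Prop :=
  ContinuousOn α (Ici 0) ∧ StrictMonoOn α (Ici 0) ∧ α 0 = 0

/-- A function of class K∞: class K and unbounded. -/
def IsClassKInf (α : ℝ → ℝ) : Prop :=
  IsClassK α ∧ Tendsto α atTop atTop

/-- Along any trajectory, the sublevel set `{V ≤ b}` is reached in finite time;
moreover whenever `V(x_t,w_t) > b`, the value function decreases by at least the
positive amount `(id − ρ)(α₄(b))`. -/
theorem sublevel_attractive {n r : ℕ}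
    (f : EuclideanSpace ℝ (Fin n) → EuclideanSpace ℝ (Fin r) → EuclideanSpace ℝ (Fin n))
    (W : Set (EuclideanSpace ℝ (Fin r)))
    (Ξ : Set (EuclideanSpace ℝ (Fin n)))
    (hΞRPI : ∀ x ∈ Ξ, ∀ w ∈ W, f x w ∈ Ξ)
    (α₄ ρ : ℝ → ℝ) (hα₄ : IsClassKInf α₄) (hρ : IsClassKInf ρ)
    (hidρ : IsClassKInf fun s => s - ρ s)
    (b : ℝ) (hb : 0 < b) (ω : ℝ) (hω : 0 ≤ ω) (hωb : ω ≤ ρ (α₄ b))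
    (V : EuclideanSpace ℝ (Fin n) → EuclideanSpace ℝ (Fin r) → ℝ)
    (hVnonneg : ∀ x w, 0 ≤ V x w)
    (hdec : ∀ x ∈ Ξ, ∀ w ∈ W, ∀ w' ∈ W, V (f x w) w' ≤ V x w - α₄ (V x w) + ω) :
    0 < α₄ b - ρ (α₄ b) ∧
      ∀ (x : ℕ → EuclideanSpace ℝ (Fin n)) (w : ℕ → EuclideanSpace ℝ (Fin r)),
        x 0 ∈ Ξ → (∀ t, w t ∈ W) → (∀ t, x (t + 1) = f (x t) (w t)) →
        (∃ T, V (x T) (w T) ≤ b) ∧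
          ∀ t, b < V (x t) (w t) →
            V (x (t + 1)) (w (t + 1)) ≤ V (x t) (w t) - (α₄ b - ρ (α₄ b)) := by
  have hα₄b : 0 < α₄ b := by
    have := hα₄.1.2.1 (le_refl (0:ℝ)) (le_of_lt hb) hb
    rwa [hα₄.1.2.2] at this
  have hδ : 0 < α₄ b - ρ (α₄ b) := by
    have := hidρ.1.2.1 (le_refl (0:ℝ)) (le_of_lt hα₄b) hα₄b
    simp only at this
    have h0 : (0:ℝ) - ρ 0 = 0 := hidρ.1.2.2
    linarith
  refine ⟨hδ, fun x w hx0 hw hxf => ?_⟩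
  -- invariance
  have hxΞ : ∀ t, x t ∈ Ξ := by
    intro t
    induction t with
    | zero => exact hx0
    | succ t ih => rw [hxf t]; exact hΞRPI _ ih _ (hw t)
  -- decrease step
  have hstep : ∀ t, b < V (x t) (w t) →
      V (x (t + 1)) (w (t + 1)) ≤ V (x t) (w t) - (α₄ b - ρ (α₄ b)) := by
    intro t hbt
    have h1 : V (x (t+1)) (w (t+1)) ≤ V (x t) (w t) - α₄ (V (x t) (w t)) + ω := by
      rw [hxf t]; exact hdec _ (hxΞ t) _ (hw t) _ (hw (t+1))
    have h2 : α₄ b ≤ α₄ (V (x t) (w t)) :=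
      (hα₄.1.2.1.monotoneOn (le_of_lt hb) (hVnonneg _ _) (le_of_lt hbt))
    linarith
  refine ⟨?_, hstep⟩
  by_contra hcon
  push_neg at hcon
  set δ := α₄ b - ρ (α₄ b) with hδdef
  have hdown : ∀ T, V (x T) (w T) ≤ V (x 0) (w 0) - T * δ := by
    intro T
    induction T with
    | zero => simp
    | succ T ih =>
        have := hstep T (hcon T)
        push_cast
        linarith
  obtain ⟨T, hT⟩ := Archimedean.arch (V (x 0) (w 0)) hδ
  have h1 := hdown (T + 1)
  have h2 := hVnonneg (x (T+1)) (w (T+1))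
  have h3 : (T:ℝ) • δ = (T:ℝ) * δ := rfl
  rw [nsmul_eq_mul] at hT
  push_cast at h1
  nlinarith
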